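/- arXiv:2501.14799 — 3 statements merged into one kernel-verified Lean document; each statement's English description precedes it below -/
import Mathlib

section
/- Let M be an extensional m-monoid. Then M is a cm-monoid if and only if for all x, y, z ∈ M and all i, j ∈ ω: x[i] = y[j] implies (x·z)[i] = (y·z)[j]. -/
universe u

open scoped Classical

/-- A finite permutation of ω: an element of S_ω, i.e. a permutation moving
only finitely many points. -/
def FinPerm (σ : Equiv.Perm ℕ) : Prop := {n : ℕ | σ n ≠ n}.Finite

/-- The raw operations of a merge algebra: the binary merges `⋆_n` and the
actions `σ̄` of (finite) permutations. -/
structure MergeOps (A : Type u) where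
  star : ℕ → A → A → A
  bar : Equiv.Perm ℕ → A → A

namespace MergeOps

variable {A : Type u}

/-- `chain g k = ((g 0 ⋆_1 g 1) ⋆_2 g 2) … ⋆_k (g k)`. -/
def chain (M : MergeOps A) (g : ℕ → A) : ℕ → A
  | 0 => g 0
  | i + 1 => M.star (i + 1) (M.chain g i) (g (i + 1))

/-- `chainStar g k y = ((…(g 0 ⋆_1 g 1) ⋆_2 …) ⋆_{k-1} g (k-1)) ⋆_k y`. -/
def chainStar (M : MergeOps A) (g : ℕ → A) (k : ℕ) (y : A) : A :=
  match k with
  | 0 => y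
  | k + 1 => M.star (k + 1) (M.chain g k) y

/-- The `n`-coordinate of `x` relative to the coordinator `pt`:
`x[n] = τ̄^n_0(x) ⋆_1 pt`. -/
def coord (M : MergeOps A) (pt x : A) (n : ℕ) : A :=
  M.star 1 (M.bar (Equiv.swap 0 n) x) pt

end MergeOps

/-- A merge algebra: operations `⋆_n` and `σ̄` satisfying axioms (B1)–(B7). -/
structure MergeAlgebra (A : Type u) extends MergeOps A where
  /-- (B1) each `⋆_n` is associative -/
  star_assoc : ∀ (n : ℕ) (x y z : A), star n (star n x y) z = star n x (star n y z)
  /-- (B1) each `⋆_n` is idempotent -/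
  star_idem : ∀ (n : ℕ) (x : A), star n x x = x
  /-- (B2) -/
  star_zero : ∀ x y : A, star 0 x y = y
  /-- (B3), first part (k ≥ n) -/
  B3a : ∀ {n k : ℕ}, n ≤ k → ∀ x y z : A, star n (star k x y) z = star n x z
  /-- (B3), second part (k ≥ n) -/
  B3b : ∀ {n k : ℕ}, n ≤ k → ∀ x y z : A, star k x (star n y z) = star k x z
  /-- (B4) (k < n) -/
  B4 : ∀ {n k : ℕ}, k < n → ∀ x y z : A, star n (star k x y) z = star k x (star n y z)
  /-- (B5) `σ̄(τ̄(x)) = (τ∘σ)‾(x)` -/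
  B5 : ∀ σ τ : Equiv.Perm ℕ, FinPerm σ → FinPerm τ → ∀ x : A,
      bar σ (bar τ x) = bar (τ * σ) x
  /-- (B5) `ῑ(x) = x` -/
  bar_id : ∀ x : A, bar 1 x = x
  /-- (B6): for `n ≤ k` and `σ` a permutation of `k`, with `f i = x` iff `σ i < n`:
  `σ̄(x ⋆_n y) = ((…(σ̄(f 0) ⋆_1 σ̄(f 1)) ⋆_2 …) ⋆_{k-1} σ̄(f (k-1))) ⋆_k y`. -/
  B6 : ∀ {n k : ℕ}, n ≤ k → ∀ σ : Equiv.Perm ℕ, (∀ i, k ≤ i → σ i = i) →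
      ∀ x y : A, bar σ (star n x y) =
        toMergeOps.chainStar (fun i => bar σ (if σ i < n then x else y)) k y
  /-- (B7) -/
  B7 : ∀ {m n : ℕ} (σ τ : Equiv.Perm ℕ), FinPerm σ → FinPerm τ →
      (∀ i, m ≤ i → i < n → σ i = τ i) →
      ∀ x y z : A, star n (star m z (bar σ x)) y = star n (star m z (bar τ x)) y

/-- An m-monoid: a monoid structure together with a merge algebra structure on
the same carrier, satisfying right distributivity (L1). -/
structure MMonoid (A : Type u) extends MergeAlgebra A where
  mul : A → A → A
  one : A
  mul_assoc : ∀ x y z : A, mul (mul x y) z = mul x (mul y z)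
  one_mul : ∀ x : A, mul one x = x
  mul_one : ∀ x : A, mul x one = x
  /-- (L1) right distributivity -/
  L1 : ∀ (n : ℕ) (x y z : A), mul (star n x y) z = star n (mul x z) (mul y z)

namespace MMonoid

variable {A : Type u} (M : MMonoid A)

/-- A cm-monoid is an m-monoid satisfying (L2): `σ̄(x)·y = σ̄(x·y)`. -/
def IsCM : Prop :=
  ∀ σ : Equiv.Perm ℕ, FinPerm σ → ∀ x y : A, M.mul (M.bar σ x) y = M.bar σ (M.mul x y)

/-- An am-monoid is an m-monoid satisfying (L3): `σ̄(x·y) = σ̄(x)·σ̄(y)`. -/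
def IsAM : Prop :=
  ∀ σ : Equiv.Perm ℕ, FinPerm σ → ∀ x y : A, M.bar σ (M.mul x y) = M.mul (M.bar σ x) (M.bar σ y)

/-- The `n`-coordinate `x[n] = τ̄^n_0(x) ⋆_1 1` (the coordinator is the unit). -/
def coord (x : A) (n : ℕ) : A := M.toMergeOps.coord M.one x n

/-- Extensionality: elements with the same coordinates are equal. -/
def Extensional : Prop := ∀ x y : A, (∀ n : ℕ, M.coord x n = M.coord y n) → x = y

/-- An element has rank ≤ n iff `x ⋆_n 1 = x`; the m-monoid is finitely ranked
if every element has finite rank. -/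
def FinitelyRanked : Prop := ∀ x : A, ∃ n : ℕ, M.star n x M.one = x

/-- A degenerate m-monoid. -/
def Degenerate : Prop :=
  (∀ σ : Equiv.Perm ℕ, FinPerm σ → ∀ x : A, M.bar σ x = x) ∧
    (∀ (n : ℕ) (x y : A), M.star n x y = y)

/-- `a` is finite dimensional: for every `n` there is `m` with
`(a·(1 ⋆_m b ⋆_{m+k} 1)) ⋆_n a = a` for all `b` and `k`. -/
def FinDimEl (a : A) : Prop :=
  ∀ n : ℕ, ∃ m : ℕ, ∀ (b : A) (k : ℕ),
    M.star n (M.mul a (M.star (m + k) (M.star m M.one b) M.one)) a = a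

/-- `a` is ω-finite dimensional: for every `n` there is `m` with
`(a·(1 ⋆_m b)) ⋆_n a = a` for all `b`. -/
def OmegaFinDimEl (a : A) : Prop :=
  ∀ n : ℕ, ∃ m : ℕ, ∀ b : A,
    M.star n (M.mul a (M.star m M.one b)) a = a

/-- An m-monoid is finite dimensional if every element is. -/
def FinDim : Prop := ∀ a : A, M.FinDimEl a

/-- An m-monoid is ω-finite dimensional if every element is. -/
def OmegaFinDim : Prop := ∀ a : A, M.OmegaFinDimEl a

end MMonoid

/-!
By (B7), `u ⋆_1 v` only sees what a permutation does at `0`, so `σ̄(x)[n] = x[σ n]`.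
Under (L2) the coordinate of a product is computed from the coordinate of its left factor,
`(x·z)[n] = (x[n]·z) ⋆_1 1`, which gives the forward direction. Conversely, since
`σ̄(x)[n] = x[σ n]`, the hypothesis gives `(σ̄(x)·y)[n] = (x·y)[σ n] = σ̄(x·y)[n]` for every `n`,
and extensionality yields (L2).
-/

namespace FinPerm

theorem swap (a b : ℕ) : FinPerm (Equiv.swap a b) :=
  ((Set.finite_singleton b).insert a).subset fun n hn => by
    by_contra h
    simp only [Set.mem_insert_iff, Set.mem_singleton_iff, not_or] at h
    exact hn (Equiv.swap_apply_of_ne_of_ne h.1 h.2)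

theorem mul {σ τ : Equiv.Perm ℕ} (hσ : FinPerm σ) (hτ : FinPerm τ) : FinPerm (σ * τ) :=
  (hσ.union hτ).subset fun n hn => by
    by_contra h
    simp only [Set.mem_union, Set.mem_ofPred_eq, not_or, not_not] at h
    exact hn (by rw [Equiv.Perm.mul_apply, h.2, h.1])

end FinPerm

namespace MergeAlgebra

variable {A : Type u} (M : MergeAlgebra A)

theorem star_one_bar_congr {σ τ : Equiv.Perm ℕ} (hσ : FinPerm σ) (hτ : FinPerm τ)
    (h0 : σ 0 = τ 0) (x y : A) : M.star 1 (M.bar σ x) y = M.star 1 (M.bar τ x) y := by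
  simpa only [M.star_zero] using
    M.B7 (m := 0) (n := 1) σ τ hσ hτ (fun i _ hi => by rwa [Nat.lt_one_iff.mp hi]) x y x

theorem coord_bar {σ : Equiv.Perm ℕ} (hσ : FinPerm σ) (pt x : A) (n : ℕ) :
    M.coord pt (M.bar σ x) n = M.coord pt x (σ n) := by
  rw [MergeOps.coord, MergeOps.coord, M.B5 _ _ (FinPerm.swap 0 n) hσ]
  exact M.star_one_bar_congr (hσ.mul (FinPerm.swap 0 n)) (FinPerm.swap 0 (σ n))
    (by simp [Equiv.Perm.mul_apply]) x pt

end MergeAlgebra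

namespace MMonoid

variable {A : Type u} {M : MMonoid A}

theorem coord_bar {σ : Equiv.Perm ℕ} (hσ : FinPerm σ) (x : A) (n : ℕ) :
    M.coord (M.bar σ x) n = M.coord x (σ n) :=
  M.toMergeAlgebra.coord_bar hσ M.one x n

theorem IsCM.coord_mul (hcm : M.IsCM) (x z : A) (n : ℕ) :
    M.coord (M.mul x z) n = M.star 1 (M.mul (M.coord x n) z) M.one := by
  rw [coord, coord, MergeOps.coord, MergeOps.coord, ← hcm _ (FinPerm.swap 0 n), M.L1,
    M.one_mul, M.B3a le_rfl]

theorem isCM_of_coord_mul_congr (hext : M.Extensional)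
    (h : ∀ (x y z : A) (i j : ℕ),
      M.coord x i = M.coord y j → M.coord (M.mul x z) i = M.coord (M.mul y z) j) :
    M.IsCM := fun σ hσ x y =>
  hext _ _ fun n => by
    rw [coord_bar hσ]
    exact h _ _ y n (σ n) (coord_bar hσ x n)

end MMonoid

/-- STATEMENT 7: an extensional m-monoid `M` is a cm-monoid if and only if
for all `x, y, z` and all `i, j`: `x[i] = y[j]` implies `(x·z)[i] = (y·z)[j]`. -/
theorem extensional_cm_iff {A : Type u} (M : MMonoid A) (hext : M.Extensional) :
    M.IsCM ↔
      ∀ (x y z : A) (i j : ℕ),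
        M.coord x i = M.coord y j → M.coord (M.mul x z) i = M.coord (M.mul y z) j :=
  ⟨fun hcm x y z i j hxy => by rw [hcm.coord_mul, hcm.coord_mul, hxy],
    M.isCM_of_coord_mul_congr hext⟩
end

section
/- An m-monoid M is degenerate if and only if M is both a cm-monoid and an am-monoid. -/
universe u

open scoped Classical

/-! Under (L2) every `σ̄` is left multiplication by `σ̄(1)`, and (L3) then makes `σ̄(1)`
idempotent; since `σ⁻¹‾(1)` is a left inverse of it, `σ̄(1) = 1` and all `σ̄` are trivial.
Once the adjacent transposition `(p p+1)` acts trivially, (B6) turns `x ⋆_{p+1} y` into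
`((x ⋆_p y) ⋆_{p+1} x) ⋆_{p+2} y`, and (B3), (B4) collapse this to `x ⋆_p y`; so every
`⋆_n` equals `⋆_0`, which is the right projection by (B2). -/

lemma finPerm_swap (a b : ℕ) : FinPerm (Equiv.swap a b) :=
  (Set.toFinite {a, b}).subset fun _ hn => (Equiv.swap_apply_ne_self_iff.1 hn).2

lemma FinPerm.inv {σ : Equiv.Perm ℕ} (hσ : FinPerm σ) : FinPerm σ⁻¹ := by
  rwa [FinPerm, show {n | σ⁻¹ n ≠ n} = {n | σ n ≠ n} from
    Set.ext fun _ => (Equiv.Perm.inv_eq_iff_eq.trans eq_comm).not]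

namespace MergeAlgebra

variable {A : Type u} (M : MergeAlgebra A)

lemma chain_eq_of_forall_le_eq {g : ℕ → A} {x : A} {k : ℕ} (hg : ∀ i ≤ k, g i = x) :
    M.chain g k = x := by
  induction k with
  | zero => exact hg 0 le_rfl
  | succ k ih =>
    rw [MergeOps.chain, ih fun i hi => hg i (by omega), hg (k + 1) le_rfl, M.star_idem]

lemma star_succ_eq_star_of_bar_swap_eq_self (p : ℕ)
    (hswap : ∀ x, M.bar (Equiv.swap p (p + 1)) x = x) (x y : A) :
    M.star (p + 1) x y = M.star p x y := by
  set σ := Equiv.swap p (p + 1)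
  have hσ : ∀ i, p + 2 ≤ i → σ i = i := fun i hi =>
    Equiv.swap_apply_of_ne_of_ne (by omega) (by omega)
  have hchain : M.chain (fun i => M.bar σ (if σ i < p + 1 then x else y)) (p + 1) =
      M.star (p + 1) (M.star p x y) x := by
    simp only [hswap]
    rw [MergeOps.chain, Equiv.swap_apply_right, if_pos p.lt_succ_self]
    cases p with
    | zero => rw [MergeOps.chain, Equiv.swap_apply_left, if_neg (by omega), M.star_zero]
    | succ q =>
      rw [MergeOps.chain, Equiv.swap_apply_left, if_neg (by omega),
        M.chain_eq_of_forall_le_eq fun i hi => by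
          rw [Equiv.swap_apply_of_ne_of_ne (by omega) (by omega), if_pos (by omega)]]
  have hB6 : M.star (p + 1) x y = M.star (p + 2) (M.star (p + 1) (M.star p x y) x) y := by
    rw [← hswap (M.star (p + 1) x y), M.B6 (Nat.le_succ _) σ hσ, MergeOps.chainStar, hchain]
  calc M.star (p + 1) x y
      = M.star (p + 1) (M.star (p + 1) x y) y := (M.B3a le_rfl x y y).symm
    _ = M.star (p + 1) (M.star p x y) y := by
      rw [hB6, M.B3a (Nat.le_succ _), M.B3a le_rfl]
    _ = M.star p x y := by rw [M.B4 p.lt_succ_self, M.star_idem]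

lemma star_eq_right_of_bar_eq_self (hbar : ∀ σ, FinPerm σ → ∀ x : A, M.bar σ x = x)
    (n : ℕ) (x y : A) : M.star n x y = y := by
  induction n with
  | zero => exact M.star_zero x y
  | succ p ih => rw [M.star_succ_eq_star_of_bar_swap_eq_self p (hbar _ (finPerm_swap _ _)), ih]

end MergeAlgebra

namespace MMonoid

variable {A : Type u} (M : MMonoid A)

lemma eq_one_of_mul_self_of_mul_eq_one {e f : A} (he : M.mul e e = e) (hfe : M.mul f e = M.one) :
    e = M.one :=
  calc e = M.mul (M.mul f e) e := by rw [hfe, M.one_mul]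
    _ = M.one := by rw [M.mul_assoc, he, hfe]

variable {M}

lemma IsCM.bar_eq_bar_one_mul (hcm : M.IsCM) {σ : Equiv.Perm ℕ} (hσ : FinPerm σ) (x : A) :
    M.bar σ x = M.mul (M.bar σ M.one) x := by
  rw [hcm σ hσ, M.one_mul]

lemma IsCM.bar_eq_self_of_isAM (hcm : M.IsCM) (ham : M.IsAM) {σ : Equiv.Perm ℕ}
    (hσ : FinPerm σ) (x : A) : M.bar σ x = x := by
  have hidem : M.mul (M.bar σ M.one) (M.bar σ M.one) = M.bar σ M.one := by
    rw [← ham σ hσ, M.one_mul]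
  have hinv : M.mul (M.bar σ⁻¹ M.one) (M.bar σ M.one) = M.one := by
    rw [← hcm.bar_eq_bar_one_mul hσ.inv, M.B5 _ _ hσ.inv hσ, mul_inv_cancel, M.bar_id]
  rw [hcm.bar_eq_bar_one_mul hσ, M.eq_one_of_mul_self_of_mul_eq_one hidem hinv, M.one_mul]

end MMonoid

/-- STATEMENT 12: an m-monoid is degenerate iff it is both a cm-monoid and an
am-monoid. -/
theorem degenerate_iff_cm_and_am {A : Type u} (M : MMonoid A) :
    M.Degenerate ↔ (M.IsCM ∧ M.IsAM) := by
  constructor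
  · rintro ⟨hbar, -⟩
    exact ⟨fun σ hσ x y => by rw [hbar σ hσ, hbar σ hσ],
      fun σ hσ x y => by rw [hbar σ hσ, hbar σ hσ, hbar σ hσ]⟩
  · rintro ⟨hcm, ham⟩
    have hbar : ∀ σ, FinPerm σ → ∀ x : A, M.bar σ x = x := fun _ hσ =>
      hcm.bar_eq_self_of_isAM ham hσ
    exact ⟨hbar, M.star_eq_right_of_bar_eq_self hbar⟩
end

section
/- Let M be a cm-monoid. Then (1) the algebra M^ca is a clone algebra, and (2) if M is finite dimensional then M^ca is a finite dimensional clone algebra. -/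
universe u

open scoped Classical

/-- A clone algebra: constants `e_n` and operations `q_n` of arity `n+1`
satisfying axioms (C1)–(C5). -/
structure CloneAlgebra (A : Type u) where
  e : ℕ → A
  q : (n : ℕ) → A → (Fin n → A) → A
  /-- (C1) -/
  C1 : ∀ (n : ℕ) (i : Fin n) (x : Fin n → A), q n (e i) x = x i
  /-- (C2) -/
  C2 : ∀ (n j : ℕ) (x : Fin n → A), n ≤ j → q n (e j) x = e j
  /-- (C3) -/
  C3 : ∀ (n : ℕ) (x : A), q n x (fun i => e i) = x
  /-- (C4) -/
  C4 : ∀ (n k : ℕ), n < k → ∀ (x : A) (y : Fin n → A),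
      q n x y = q k x (fun i => if h : (i : ℕ) < n then y ⟨i, h⟩ else e i)
  /-- (C5) -/
  C5 : ∀ (n : ℕ) (x : A) (y z : Fin n → A),
      q n (q n x y) z = q n x (fun i => q n (y i) z)

namespace CloneAlgebra

variable {A : Type u} (C : CloneAlgebra A)

/-- `a` is independent of `e_n` if `q_{n+1}(a, e_0, …, e_{n-1}, e_{n+1}) = a`. -/
def IndepOf (a : A) (n : ℕ) : Prop :=
  C.q (n + 1) a (fun i => if (i : ℕ) < n then C.e i else C.e (n + 1)) = a

/-- A clone algebra is finite dimensional if every element depends on only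
finitely many `e_n`. -/
def FinDim : Prop := ∀ a : A, {n : ℕ | ¬ C.IndepOf a n}.Finite

end CloneAlgebra

namespace MMonoid

variable {A : Type u} (M : MMonoid A)

/-- `b̂_0 = b_0`, `b̂_{i+1} = b̂_i ⋆_{i+1} τ̄^{i+1}_0(b_{i+1})`. -/
def hatSeq (b : ℕ → A) : ℕ → A
  | 0 => b 0
  | i + 1 => M.star (i + 1) (hatSeq b i) (M.bar (Equiv.swap 0 (i + 1)) (b (i + 1)))

/-- `b̂_{n-1}` for a finite tuple `b_0, …, b_{n-1}` (the unit for `n = 0`). -/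
def hatFin : (n : ℕ) → (Fin n → A) → A
  | 0, _ => M.one
  | n + 1, b => M.hatSeq (fun i => if h : i < n + 1 then b ⟨i, h⟩ else M.one) n

end MMonoid

namespace MergeAlgebra

variable {A : Type u} (M : MergeAlgebra A)

lemma bar_swap_bar_swap (i j : ℕ) (x : A) :
    M.bar (Equiv.swap i j) (M.bar (Equiv.swap i j) x) = x := by
  rw [M.B5 _ _ (finPerm_swap i j) (finPerm_swap i j), Equiv.swap_mul_self, M.bar_id]

lemma bar_swap_self (i : ℕ) (x : A) : M.bar (Equiv.swap i i) x = x := by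
  rw [Equiv.swap_self]
  exact M.bar_id x

lemma star_eq_self_of_le {p x : A} {m j : ℕ} (hx : M.star m x p = x) (hmj : m ≤ j) :
    M.star j x p = x := by
  rcases hmj.eq_or_lt with rfl | hlt
  · exact hx
  · rw [← hx, M.B4 hlt, M.star_idem]

lemma star_right_absorb {k : ℕ} {p z : A} (hz : M.star k z p = z) (w : A) :
    M.star k w z = M.star k w p := by
  rw [← hz, M.B3b le_rfl]

lemma star_star_of_le {m j : ℕ} (hmj : m ≤ j) (x b : A) :
    M.star m x (M.star j x b) = M.star j x b := by
  rcases hmj.eq_or_lt with rfl | hlt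
  · rw [M.B3b le_rfl]
  · rw [← M.B4 hlt, M.star_idem]

lemma star_one_chain (g : ℕ → A) (j : ℕ) (z : A) :
    M.star 1 (M.chain g j) z = M.star 1 (g 0) z := by
  induction j with
  | zero => rfl
  | succ j ih => rw [MergeOps.chain, M.B3a (by omega), ih]

lemma star_chain_self (g : ℕ → A) (n : ℕ) (h : A) :
    M.star n h (M.chain g n) = M.star n h (g n) := by
  cases n with
  | zero => rfl
  | succ n => rw [MergeOps.chain, M.B3b le_rfl]

/-- (B6) with `k = max n (s + 1)`. -/
lemma star_one_bar_swap_star (n s : ℕ) (X Y z : A) :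
    M.star 1 (M.bar (Equiv.swap 0 s) (M.star n X Y)) z
      = M.star 1 (M.bar (Equiv.swap 0 s) (if s < n then X else Y)) z := by
  obtain ⟨k, hk⟩ : ∃ k, max n (s + 1) = k + 1 := ⟨max n (s + 1) - 1, by omega⟩
  rw [M.B6 (k := k + 1) (by omega) (Equiv.swap 0 s)
      (fun i hi => Equiv.swap_apply_of_ne_of_ne (by omega) (by omega)),
    MergeOps.chainStar, M.B3a (by omega), star_one_chain, Equiv.swap_apply_left]

lemma bar_swap_star_one (n : ℕ) (X Y : A) :
    M.bar (Equiv.swap 0 n) (M.star 1 X Y)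
      = M.star (n + 1) (M.chain (fun i => M.bar (Equiv.swap 0 n)
          (if Equiv.swap 0 n i < 1 then X else Y)) n) Y :=
  M.B6 (n := 1) (k := n + 1) (by omega) _ (fun i hi => Equiv.swap_apply_of_ne_of_ne (by omega) (by omega)) X Y

lemma star_bar_swap_star_one (n : ℕ) (h X Y : A) :
    M.star n h (M.bar (Equiv.swap 0 n) (M.star 1 X Y))
      = M.star (n + 1) (M.star n h (M.bar (Equiv.swap 0 n) X)) Y := by
  rw [bar_swap_star_one, ← M.B4 (Nat.lt_succ_self n), star_chain_self, Equiv.swap_apply_right,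
    if_pos Nat.zero_lt_one]

lemma star_succ_bar_swap_star_one (n : ℕ) (X Y : A) :
    M.star (n + 1) (M.bar (Equiv.swap 0 n) (M.star 1 X Y)) Y
      = M.bar (Equiv.swap 0 n) (M.star 1 X Y) := by
  rw [bar_swap_star_one, M.star_assoc, M.star_idem]

end MergeAlgebra

namespace MMonoid

variable {A : Type u} (M : MMonoid A)

lemma coord_def (x : A) (n : ℕ) :
    M.coord x n = M.star 1 (M.bar (Equiv.swap 0 n) x) M.one := rfl

lemma coord_rank_one (x : A) (n : ℕ) : M.star 1 (M.coord x n) M.one = M.coord x n :=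
  M.B3a le_rfl _ _ _

lemma coord_star (n s : ℕ) (X Y : A) :
    M.coord (M.star n X Y) s = M.coord (if s < n then X else Y) s :=
  M.star_one_bar_swap_star n s X Y M.one

lemma coord_bar_swap {x : A} (hx : M.star 1 x M.one = x) (n : ℕ) :
    M.coord (M.bar (Equiv.swap 0 n) x) n = x := by
  rw [coord_def, M.bar_swap_bar_swap, hx]

lemma coord_of_rank_le {x : A} {n j : ℕ} (hx : M.star n x M.one = x) (hnj : n ≤ j) :
    M.coord x j = M.coord M.one j := by
  rw [← hx, coord_star, if_neg (by omega)]

/-- By (L1) and (L2), `1[j] · H = τ̄^j_0(H) ⋆_1 H`. -/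
lemma star_one_coord_one_mul (hcm : M.IsCM) (j : ℕ) (H : A) :
    M.star 1 (M.mul (M.coord M.one j) H) M.one = M.coord H j := by
  rw [coord_def, M.L1, hcm _ (finPerm_swap 0 j), M.one_mul, M.B3a le_rfl, ← coord_def]

lemma star_mul_self_of_rank {k : ℕ} {x : A} (hx : M.star k x M.one = x) (z : A) :
    M.star k (M.mul x z) z = M.mul x z := by
  conv_rhs => rw [← hx, M.L1, M.one_mul]

lemma star_bar_swap_coord (n : ℕ) (h x z : A) :
    M.star (n + 1) (M.star n h (M.bar (Equiv.swap 0 n) (M.coord x n))) z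
      = M.star (n + 1) (M.star n h x) z := by
  rw [coord_def, M.star_bar_swap_star_one, M.bar_swap_bar_swap, M.B3a le_rfl]

lemma star_bar_swap_coord_one {n : ℕ} {h : A} (hh : M.star n h M.one = h) :
    M.star n h (M.bar (Equiv.swap 0 n) (M.coord M.one n)) = h := by
  rw [coord_def, M.star_bar_swap_star_one, M.bar_swap_bar_swap, hh]
  exact M.star_eq_self_of_le hh n.le_succ

lemma hatSeq_congr {b b' : ℕ → A} (j : ℕ) (hbb : ∀ l ≤ j, b l = b' l) :
    M.hatSeq b j = M.hatSeq b' j := by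
  induction j with
  | zero => exact hbb 0 le_rfl
  | succ j ih => rw [hatSeq, hatSeq, ih fun l hl => hbb l (by omega), hbb (j + 1) le_rfl]

/-- The recursion defining `b̂` also holds at `n = 0`, since `x ⋆_0 y = y`. -/
lemma hatFin_succ (n : ℕ) (b : Fin (n + 1) → A) :
    M.hatFin (n + 1) b
      = M.star n (M.hatFin n (Fin.init b)) (M.bar (Equiv.swap 0 n) (b (Fin.last n))) := by
  cases n with
  | zero => rw [M.star_zero, M.bar_swap_self]; rfl
  | succ n =>
    rw [hatFin, hatSeq, dif_pos (by omega), hatFin]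
    congr 1
    exact M.hatSeq_congr n fun l hl => by rw [dif_pos (by omega), dif_pos (by omega)]; rfl

variable {M}

lemma hatFin_rank {n : ℕ} {b : Fin n → A} (hb : ∀ i, M.star 1 (b i) M.one = b i) :
    M.star n (M.hatFin n b) M.one = M.hatFin n b := by
  induction n with
  | zero => exact M.star_zero _ _
  | succ n ih =>
    rw [hatFin_succ, M.B4 n.lt_succ_self, ← hb (Fin.last n), M.star_succ_bar_swap_star_one]

lemma coord_hatFin {n : ℕ} {b : Fin n → A} (hb : ∀ i, M.star 1 (b i) M.one = b i) (i : Fin n) :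
    M.coord (M.hatFin n b) i = b i := by
  induction n with
  | zero => exact i.elim0
  | succ n ih =>
    rw [hatFin_succ, coord_star]
    induction i using Fin.lastCases with
    | last => rw [Fin.val_last, if_neg n.lt_irrefl, M.coord_bar_swap (hb _)]
    | cast j => rw [Fin.val_castSucc, if_pos j.isLt, ih (b := Fin.init b) (fun i => hb _) j]; rfl

lemma coord_hatFin_of_le {n j : ℕ} {b : Fin n → A} (hb : ∀ i, M.star 1 (b i) M.one = b i)
    (hnj : n ≤ j) : M.coord (M.hatFin n b) j = M.coord M.one j :=
  M.coord_of_rank_le (hatFin_rank hb) hnj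

variable (M)

lemma hatFin_coord_one (n : ℕ) : M.hatFin n (fun i => M.coord M.one i) = M.one := by
  induction n with
  | zero => rfl
  | succ n ih =>
    rw [hatFin_succ, Fin.init_def]
    simp only [Fin.val_castSucc]
    rw [ih]
    exact M.star_bar_swap_coord_one (M.star_idem n M.one)

lemma hatFin_eq_of_coord_one {n k : ℕ} (hnk : n ≤ k) {y : Fin n → A}
    (hy : ∀ i, M.star 1 (y i) M.one = y i) {t : Fin k → A}
    (hty : ∀ i : Fin n, t (Fin.castLE hnk i) = y i)
    (hte : ∀ i : Fin k, n ≤ i → t i = M.coord M.one i) :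
    M.hatFin k t = M.hatFin n y := by
  induction k, hnk using Nat.le_induction with
  | base => exact congrArg _ (funext hty)
  | succ k hnk ih =>
    rw [hatFin_succ, ih (fun i => hty i) (fun i hi => hte _ hi), hte _ (by simpa using hnk)]
    exact M.star_bar_swap_coord_one (M.star_eq_self_of_le (hatFin_rank hy) hnk)

lemma star_hatFin_subst (hcm : M.IsCM) {n : ℕ} (y w : Fin n → A) (Z : A)
    (hw : ∀ i, w i = M.star 1 (M.mul (y i) Z) M.one) :
    M.star n (M.hatFin n w) Z = M.star n (M.mul (M.hatFin n y) Z) Z := by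
  induction n with
  | zero => rw [M.star_zero, M.star_zero]
  | succ n ih =>
    -- by (B3a), `H ⋆_n Q` depends on `H` only through `H ⋆_n Z`
    have hinit : ∀ Q, M.star n (M.hatFin n (Fin.init w)) Q
        = M.star n (M.mul (M.hatFin n (Fin.init y)) Z) Q := fun Q => by
      rw [← M.B3a le_rfl _ Z Q, ih (Fin.init y) (Fin.init w) fun i => hw _, M.B3a le_rfl]
    rw [hatFin_succ, hatFin_succ, M.B4 n.lt_succ_self, hinit, ← M.B4 n.lt_succ_self,
      hw (Fin.last n), M.L1, hcm _ (finPerm_swap 0 n),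
      ← M.star_bar_swap_coord n _ (M.bar (Equiv.swap 0 n) (M.mul (y (Fin.last n)) Z)),
      coord_def, M.bar_swap_bar_swap]

lemma hatFin_subst (hcm : M.IsCM) {n : ℕ} {y z : Fin n → A}
    (hy : ∀ i, M.star 1 (y i) M.one = y i) (hz : ∀ i, M.star 1 (z i) M.one = z i) :
    M.hatFin n (fun i => M.star 1 (M.mul (y i) (M.hatFin n z)) M.one)
      = M.mul (M.hatFin n y) (M.hatFin n z) :=
  calc _ = M.star n (M.hatFin n (fun i => M.star 1 (M.mul (y i) (M.hatFin n z)) M.one))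
        (M.hatFin n z) := by
        rw [M.star_right_absorb (hatFin_rank hz), hatFin_rank fun i => M.B3a le_rfl _ _ _]
    _ = M.star n (M.mul (M.hatFin n y) (M.hatFin n z)) (M.hatFin n z) :=
        M.star_hatFin_subst hcm _ _ _ fun _ => rfl
    _ = _ := M.star_mul_self_of_rank (hatFin_rank hy) _

lemma hatFin_skip (n : ℕ) :
    M.hatFin (n + 1)
        (fun i => if (i : ℕ) < n then M.coord M.one i else M.coord M.one (n + 1))
      = M.star (n + 1)
          (M.star n M.one (M.bar (Equiv.swap 0 n) (M.bar (Equiv.swap 0 (n + 1)) M.one))) M.one := by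
  have hinit : Fin.init (fun i : Fin (n + 1) =>
      if (i : ℕ) < n then M.coord M.one i else M.coord M.one (n + 1))
        = fun i : Fin n => M.coord M.one i := funext fun i => if_pos i.isLt
  rw [hatFin_succ, hinit, hatFin_coord_one, Fin.val_last, if_neg n.lt_irrefl, coord_def,
    M.star_bar_swap_star_one]

variable {M}

lemma FinDimEl.exists_star_one_mul_eq {a : A} (hfd : M.FinDimEl a) (ha : M.star 1 a M.one = a) :
    ∃ m, ∀ n ≥ m, ∀ b, M.star 1 (M.mul a (M.star (n + 1) (M.star n M.one b) M.one)) M.one = a := by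
  obtain ⟨m, hm⟩ := hfd 1
  refine ⟨m, fun n hmn b => ?_⟩
  have := hm (M.star n M.one b) (n + 1 - m)
  rwa [Nat.add_sub_cancel' (by omega), M.star_star_of_le hmn, M.star_right_absorb ha] at this

variable (M)

/-- The clone algebra `M^ca`. -/
def toCloneAlgebra (hcm : M.IsCM) : CloneAlgebra {x : A // M.star 1 x M.one = x} where
  e n := ⟨M.coord M.one n, M.coord_rank_one _ _⟩
  q n a b := ⟨M.star 1 (M.mul a (M.hatFin n fun i => b i)) M.one, M.B3a le_rfl _ _ _⟩
  C1 n i x := Subtype.ext <| by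
    dsimp only
    rw [star_one_coord_one_mul M hcm]; exact coord_hatFin (fun i => (x i).2) i
  C2 n j x hnj := Subtype.ext <| by
    dsimp only
    rw [star_one_coord_one_mul M hcm]; exact coord_hatFin_of_le (fun i => (x i).2) hnj
  C3 n x := Subtype.ext <| by
    dsimp only
    rw [hatFin_coord_one, M.mul_one]; exact x.2
  C4 n k hnk x y := Subtype.ext <| by
    dsimp only
    rw [M.hatFin_eq_of_coord_one hnk.le (fun i => (y i).2) (fun i => by simp)
      (fun i hi => by simp [Nat.not_lt.2 hi])]
  C5 n x y z := Subtype.ext <| by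
    dsimp only
    rw [M.hatFin_subst hcm (fun i => (y i).2) (fun i => (z i).2), M.L1, M.one_mul, M.B3a le_rfl,
      M.mul_assoc]

lemma toCloneAlgebra_finDim (hcm : M.IsCM) (hfd : M.FinDim) : (M.toCloneAlgebra hcm).FinDim := by
  intro a
  obtain ⟨m, hm⟩ := (hfd a).exists_star_one_mul_eq a.2
  refine (Set.finite_Iio m).subset fun n hn => ?_
  by_contra hnm
  refine hn (Subtype.ext ?_)
  simp only [toCloneAlgebra, apply_ite Subtype.val]
  rw [hatFin_skip]
  exact hm n (Nat.not_lt.1 hnm) _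

end MMonoid

/-- STATEMENT 16: for every cm-monoid `M`, the structure `M^ca`, with universe
the set `M_{|1}` of elements of rank ≤ 1, constants `e_n = 1[n]` and operations
`q_n(a, b_0, …, b_{n-1}) = (a · b̂_{n-1}) ⋆_1 1`, is a clone algebra; moreover
if `M` is finite dimensional then `M^ca` is a finite dimensional clone
algebra. -/
theorem cmMonoid_ca {A : Type u} (M : MMonoid A) (hcm : M.IsCM) :
    ∃ D : CloneAlgebra {x : A // M.star 1 x M.one = x},
      (∀ n : ℕ, (D.e n : A) = M.coord M.one n) ∧
      (∀ (n : ℕ) (a : {x : A // M.star 1 x M.one = x})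
          (b : Fin n → {x : A // M.star 1 x M.one = x}),
        (D.q n a b : A) =
          M.star 1 (M.mul (a : A) (M.hatFin n (fun i => (b i : A)))) M.one) ∧
      (M.FinDim → D.FinDim) :=
  ⟨M.toCloneAlgebra hcm, fun _ => rfl, fun _ _ _ => rfl, M.toCloneAlgebra_finDim hcm⟩
end
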